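/- Let d ≥ 3, let G be a finite simple graph with tw(G) ≥ d, and let v be a vertex of G. Let G' be the graph obtained from G by adding d + 1 new vertices forming a clique on d + 1 vertices with exactly one edge {x, y} removed, together with the two edges {v, x} and {v, y}. Then tw(G') = tw(G), and the degree of v in G' is its degree in G plus 2. -/

import Mathlib

open SimpleGraph

/-- `(T, β)` is a tree decomposition of the graph `G`: `T` is a tree, every vertex of `G`
is in some bag, both endpoints of every edge of `G` lie in a common bag, and for every
vertex of `G` the set of nodes of `T` whose bag contains it induces a connected subtree. -/
def IsTreeDecomposition {V ι : Type} (G : SimpleGraph V) (T : SimpleGraph ι)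
    (β : ι → Set V) : Prop :=
  T.IsTree ∧
  (∀ v : V, ∃ x : ι, v ∈ β x) ∧
  (∀ ⦃u v : V⦄, G.Adj u v → ∃ x : ι, u ∈ β x ∧ v ∈ β x) ∧
  (∀ v : V, (T.induce {x : ι | v ∈ β x}).Connected)

/-- The width of a decomposition with bags `β`: the maximum of `|β x| - 1` over all nodes. -/
noncomputable def decompWidth {V ι : Type} (β : ι → Set V) : ℕ :=
  ⨆ x : ι, ((β x).ncard - 1)

/-- The treewidth of `G`: the minimum width of a tree decomposition of `G`. -/
noncomputable def treewidth {V : Type} (G : SimpleGraph V) : ℕ :=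
  sInf { k : ℕ | ∃ (ι : Type) (T : SimpleGraph ι) (β : ι → Set V),
    IsTreeDecomposition G T β ∧ decompWidth β = k }

/-- A path decomposition of `G` with bags `β p_1, …, β p_r`: every vertex is in some bag,
both endpoints of every edge lie in a common bag, and the bags containing a fixed vertex
form a contiguous interval. -/
def IsPathDecomposition {V : Type} (G : SimpleGraph V) (r : ℕ) (β : Fin r → Set V) : Prop :=
  (∀ v : V, ∃ x : Fin r, v ∈ β x) ∧
  (∀ ⦃u v : V⦄, G.Adj u v → ∃ x : Fin r, u ∈ β x ∧ v ∈ β x) ∧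
  (∀ (v : V) (i j k : Fin r), i ≤ j → j ≤ k → v ∈ β i → v ∈ β k → v ∈ β j)

/-- The pathwidth of `G`: the minimum width of a path decomposition of `G`. -/
noncomputable def pathwidth {V : Type} (G : SimpleGraph V) : ℕ :=
  sInf { k : ℕ | ∃ (r : ℕ) (β : Fin (r + 1) → Set V),
    IsPathDecomposition G (r + 1) β ∧ decompWidth β = k }

/-- The graph obtained from `G` by adding a gadget at the vertex `v`: `d + 1` new vertices
forming a clique on `d + 1` vertices with the single edge `{x, y}` removed (here `x` and
`y` are the new vertices with indices `0` and `1`), together with the two edges `{v, x}`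
and `{v, y}`. -/
def addGadget {V : Type} (G : SimpleGraph V) (v : V) (d : ℕ) :
    SimpleGraph (V ⊕ Fin (d + 1)) :=
  SimpleGraph.fromRel (fun a b =>
    match a, b with
    | Sum.inl x, Sum.inl y => G.Adj x y
    | Sum.inr i, Sum.inr j => ¬(i = 0 ∧ j = 1) ∧ ¬(i = 1 ∧ j = 0)
    | Sum.inl x, Sum.inr i => x = v ∧ (i = 0 ∨ i = 1)
    | Sum.inr i, Sum.inl x => x = v ∧ (i = 0 ∨ i = 1))

/-! Since `G` is an induced subgraph of the new graph, its treewidth can only grow. Conversely,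
take an optimal tree decomposition of `G`, pick a node `x₀` whose bag contains `v`, and attach to
it a path of two new nodes: one with bag `{v, x, y}` and, below it, one with the whole gadget as
bag. This is again a tree decomposition, and the new bags have widths `2` and `d`, both at most
`tw(G)`. -/

namespace SimpleGraph

variable {V W : Type*}

/-- Every edge of the image stays a bridge: a detour around it pulls back along a left inverse
of `f`. -/
lemma IsAcyclic.map {G : SimpleGraph V} {f : V → W} (hf : f.Injective) (h : G.IsAcyclic) :
    (G.map f).IsAcyclic := by
  rw [isAcyclic_iff_forall_adj_isBridge] at h ⊢
  rintro _ _ ⟨-, a, b, hab, rfl, rfl⟩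
  have : Nonempty V := ⟨a⟩
  have hinv : Function.LeftInverse (Function.invFun f) f := Function.leftInverse_invFun hf
  let g : (G.map f).deleteEdges {s(f a, f b)} →g G.deleteEdges {s(a, b)} :=
    ⟨Function.invFun f, by
      intro _ _ h
      rw [deleteEdges_adj] at h ⊢
      obtain ⟨⟨-, u, w, huw, rfl, rfl⟩, hne⟩ := h
      simp only [Set.mem_singleton_iff, Sym2.eq_iff, hf.eq_iff] at hne
      simp only [hinv u, hinv w, Set.mem_singleton_iff, Sym2.eq_iff]
      exact ⟨huw, hne⟩⟩
  intro hr
  apply h hab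
  convert hr.map g <;> exact (hinv _).symm

lemma not_reachable_map_of_notMem_range {G : SimpleGraph V} {f : V → W} {u w : W}
    (hw : w ∉ Set.range f) (hu : u ≠ w) : ¬(G.map f).Reachable w u := by
  rintro ⟨p⟩
  cases p with
  | nil => exact hu rfl
  | cons h _ =>
    obtain ⟨-, a, -, -, ha, -⟩ := h
    exact hw ⟨a, ha⟩

variable {ι : Type*} (T : SimpleGraph ι) (x : ι)

def addLeaf : SimpleGraph (Option ι) :=
  T.map some ⊔ edge none (some x)

variable {T x}

@[simp]
lemma addLeaf_adj_some_some {s t : ι} : (T.addLeaf x).Adj (some s) (some t) ↔ T.Adj s t := by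
  simp [addLeaf, edge_adj, map_adj']
  exact Adj.ne

lemma addLeaf_adj_none_some : (T.addLeaf x).Adj none (some x) := by
  simp [addLeaf, edge_adj]

def addLeafSome : T →g T.addLeaf x := ⟨some, addLeaf_adj_some_some.2⟩

lemma IsTree.addLeaf (hT : T.IsTree) : (T.addLeaf x).IsTree where
  connected := by
    refine (connected_iff_exists_forall_reachable _).2 ⟨some x, ?_⟩
    rintro (_ | t)
    · exact addLeaf_adj_none_some.symm.reachable
    · exact (hT.connected.preconnected x t).map addLeafSome
  isAcyclic := (hT.isAcyclic.map (Option.some_injective _)).sup_edge_of_not_reachable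
    (not_reachable_map_of_notMem_range (by simp) (by simp))

lemma Connected.induce_image {G : SimpleGraph V} {H : SimpleGraph W} (f : G →g H) {s : Set V}
    (h : (G.induce s).Connected) : (H.induce (f '' s)).Connected :=
  h.map (induceHom f (Set.mapsTo_image f s)) (by rintro ⟨_, x, hx, rfl⟩; exact ⟨⟨x, hx⟩, rfl⟩)

lemma connected_induce_singleton (G : SimpleGraph V) (v : V) : (G.induce {v}).Connected := by
  rw [induce_singleton_eq_top]
  exact connected_top

lemma connected_induce_addLeaf {S : Set (Option ι)} (hS : (T.induce (some ⁻¹' S)).Connected)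
    (hnone : none ∈ S → some x ∈ S) : ((T.addLeaf x).induce S).Connected := by
  have himage := hS.induce_image (addLeafSome (x := x))
  by_cases h : none ∈ S
  · have hsplit : S = some '' (some ⁻¹' S) ∪ {none} := by
      ext (_ | _) <;> simp [h]
    rw [hsplit]
    exact connected_induce_union himage.preconnected
      (connected_induce_singleton _ _).preconnected ⟨x, hnone h, rfl⟩ rfl
      addLeaf_adj_none_some.symm
  · have hsplit : S = some '' (some ⁻¹' S) := by
      ext (_ | _) <;> simp [h]
    rwa [hsplit]

end SimpleGraph

section Treewidth

variable {V W ι : Type}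

lemma exists_isTreeDecomposition_decompWidth_eq_treewidth (G : SimpleGraph V) :
    ∃ (ι : Type) (T : SimpleGraph ι) (β : ι → Set V),
      IsTreeDecomposition G T β ∧ decompWidth β = treewidth G := by
  have hbag : IsTreeDecomposition G (⊥ : SimpleGraph Unit) fun _ => Set.univ :=
    ⟨⟨connected_bot_iff.2 ⟨inferInstance, inferInstance⟩, IsAcyclic.of_subsingleton⟩,
      fun _ => ⟨(), trivial⟩, fun _ _ _ => ⟨(), trivial, trivial⟩,
      fun _ => connected_bot_iff.2 ⟨inferInstance, ⟨⟨(), trivial⟩⟩⟩⟩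
  exact Nat.sInf_mem (s := {k | ∃ (ι : Type) (T : SimpleGraph ι) (β : ι → Set V),
    IsTreeDecomposition G T β ∧ decompWidth β = k}) ⟨_, Unit, ⊥, _, hbag, rfl⟩

lemma IsTreeDecomposition.treewidth_le {G : SimpleGraph V} {T : SimpleGraph ι} {β : ι → Set V}
    (h : IsTreeDecomposition G T β) : treewidth G ≤ decompWidth β :=
  Nat.sInf_le ⟨ι, T, β, h, rfl⟩

lemma decompWidth_le {β : ι → Set V} {k : ℕ} (h : ∀ x, (β x).ncard ≤ k + 1) :
    decompWidth β ≤ k :=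
  ciSup_le' fun x => Nat.sub_le_of_le_add (h x)

lemma ncard_le_decompWidth_add_one [Finite V] (β : ι → Set V) (x : ι) :
    (β x).ncard ≤ decompWidth β + 1 := by
  have hbdd : BddAbove (Set.range fun x => (β x).ncard - 1) :=
    ⟨Nat.card V, by rintro _ ⟨y, rfl⟩; exact (Nat.sub_le _ _).trans (Set.ncard_le_card _)⟩
  exact Nat.le_add_of_sub_le (le_ciSup hbdd x)

lemma IsTreeDecomposition.comap {G : SimpleGraph V} {H : SimpleGraph W} {T : SimpleGraph ι}
    {β : ι → Set W} (h : IsTreeDecomposition H T β) (f : G →g H) :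
    IsTreeDecomposition G T fun x => f ⁻¹' β x := by
  obtain ⟨htree, hcover, hedge, hconn⟩ := h
  exact ⟨htree, fun u => hcover (f u), fun _ _ hab => hedge (f.map_adj hab), fun u => hconn (f u)⟩

lemma treewidth_le_of_injective [Finite W] {G : SimpleGraph V} {H : SimpleGraph W} (f : G →g H)
    (hf : Function.Injective f) : treewidth G ≤ treewidth H := by
  obtain ⟨ι, T, β, hdec, hwidth⟩ := exists_isTreeDecomposition_decompWidth_eq_treewidth H
  refine (hdec.comap f).treewidth_le.trans (hwidth ▸ decompWidth_le fun x => ?_)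
  exact (Set.ncard_le_ncard_of_injOn f (fun _ h => h) hf.injOn).trans
    (ncard_le_decompWidth_add_one β x)

end Treewidth

section Gadget

variable {V ι : Type} {G : SimpleGraph V} {v : V} {d : ℕ}

@[simp]
lemma addGadget_adj_inl_inl {a b : V} : (addGadget G v d).Adj (.inl a) (.inl b) ↔ G.Adj a b := by
  simp only [addGadget, fromRel_adj, ne_eq, Sum.inl.injEq]
  exact ⟨fun ⟨_, h⟩ => h.elim id Adj.symm, fun h => ⟨h.ne, .inl h⟩⟩

@[simp]
lemma addGadget_adj_inl_inr {a : V} {i : Fin (d + 1)} :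
    (addGadget G v d).Adj (.inl a) (.inr i) ↔ a = v ∧ (i = 0 ∨ i = 1) := by
  simp [addGadget, fromRel_adj]

lemma neighborSet_addGadget_inl_self :
    (addGadget G v d).neighborSet (.inl v) = .inl '' G.neighborSet v ∪ {.inr 0, .inr 1} := by
  ext (u | i) <;> simp

lemma ncard_neighborSet_addGadget_inl_self [Finite V] (hd : 1 ≤ d) :
    ((addGadget G v d).neighborSet (.inl v)).ncard = (G.neighborSet v).ncard + 2 := by
  have h01 : (0 : Fin (d + 1)) ≠ 1 := by
    simp [Fin.ext_iff, Nat.mod_eq_of_lt (by omega : 1 < d + 1)]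
  rw [neighborSet_addGadget_inl_self, Set.ncard_union_eq (by simp [Set.disjoint_left]),
    Set.ncard_image_of_injective _ Sum.inl_injective, Set.ncard_pair (by simpa using h01)]

/-- Bags on `T` extended by the path `x₀ — some none — none`: the bag `{v, x, y}` is hung below
a node `x₀` containing `v`, and the bag of all `d + 1` new vertices below it. -/
def gadgetBags (β : ι → Set V) (v : V) (d : ℕ) : Option (Option ι) → Set (V ⊕ Fin (d + 1))
  | none => Set.range .inr
  | some none => {.inl v, .inr 0, .inr 1}
  | some (some t) => .inl '' β t

lemma isTreeDecomposition_addGadget {T : SimpleGraph ι} {β : ι → Set V}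
    (h : IsTreeDecomposition G T β) {x₀ : ι} (hx₀ : v ∈ β x₀) :
    IsTreeDecomposition (addGadget G v d) ((T.addLeaf x₀).addLeaf none) (gadgetBags β v d) := by
  obtain ⟨htree, hcover, hedge, hconn⟩ := h
  refine ⟨htree.addLeaf.addLeaf, ?_, ?_, ?_⟩
  · rintro (u | i)
    · obtain ⟨t, ht⟩ := hcover u
      exact ⟨some (some t), u, ht, rfl⟩
    · exact ⟨none, i, rfl⟩
  · rintro (a | i) (b | j) hab
    · obtain ⟨t, hat, hbt⟩ := hedge (addGadget_adj_inl_inl.1 hab)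
      exact ⟨some (some t), ⟨a, hat, rfl⟩, ⟨b, hbt, rfl⟩⟩
    · obtain ⟨rfl, hj⟩ := addGadget_adj_inl_inr.1 hab
      exact ⟨some none, by rcases hj with rfl | rfl <;> simp [gadgetBags]⟩
    · obtain ⟨rfl, hi⟩ := addGadget_adj_inl_inr.1 hab.symm
      exact ⟨some none, by rcases hi with rfl | rfl <;> simp [gadgetBags]⟩
    · exact ⟨none, ⟨i, rfl⟩, ⟨j, rfl⟩⟩
  · rintro (u | i)
    · have hbags : some ⁻¹' (some ⁻¹' {o | .inl u ∈ gadgetBags β v d o}) = {t | u ∈ β t} := by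
        ext t
        simp [gadgetBags]
      refine connected_induce_addLeaf (connected_induce_addLeaf (hbags ▸ hconn u) ?_)
        (by simp [gadgetBags])
      simpa [gadgetBags] using fun h : u = v => h ▸ hx₀
    · by_cases hi : i = 0 ∨ i = 1
      · have hbags : some ⁻¹' {o | .inr i ∈ gadgetBags β v d o} = {none} := by
          ext (_ | t) <;> simp [gadgetBags, hi]
        refine connected_induce_addLeaf (hbags ▸ connected_induce_singleton _ _) ?_
        simpa [gadgetBags] using hi
      · have hbags : {o | .inr i ∈ gadgetBags β v d o} = {none} := by
          ext (_ | _ | t) <;> simp_all [gadgetBags]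
        exact hbags ▸ connected_induce_singleton _ _

lemma treewidth_addGadget_le [Finite V] (hd : 2 ≤ d) (htw : d ≤ treewidth G) :
    treewidth (addGadget G v d) ≤ treewidth G := by
  obtain ⟨ι, T, β, hdec, hwidth⟩ := exists_isTreeDecomposition_decompWidth_eq_treewidth G
  obtain ⟨x₀, hx₀⟩ := hdec.2.1 v
  refine (isTreeDecomposition_addGadget hdec hx₀).treewidth_le.trans (decompWidth_le ?_)
  rintro (_ | _ | t)
  · simpa [gadgetBags, Set.ncard_range_of_injective Sum.inr_injective] using htw
  · rw [gadgetBags]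
    exact (Set.ncard_insert_le _ _).trans
      (Nat.succ_le_succ ((Set.ncard_insert_le _ _).trans (by rw [Set.ncard_singleton]; omega)))
  · rw [gadgetBags, Set.ncard_image_of_injective _ Sum.inl_injective, ← hwidth]
    exact ncard_le_decompWidth_add_one β t

end Gadget

/-- For `d ≥ 3` and a finite graph `G` with `tw(G) ≥ d`, attaching to a vertex `v` a clique
on `d + 1` new vertices minus one edge `{x, y}` together with the edges `{v, x}` and
`{v, y}` does not change the treewidth, while it increases the degree of `v` by `2`. -/
theorem treewidth_addGadget {V : Type} [Fintype V] (G : SimpleGraph V)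
    (d : ℕ) (hd : 3 ≤ d) (htw : d ≤ treewidth G) (v : V) :
    treewidth (addGadget G v d) = treewidth G ∧
    ((addGadget G v d).neighborSet (Sum.inl v)).ncard = (G.neighborSet v).ncard + 2 :=
  ⟨le_antisymm (treewidth_addGadget_le (by omega) htw)
      (treewidth_le_of_injective ⟨Sum.inl, addGadget_adj_inl_inl.2⟩ Sum.inl_injective),
    ncard_neighborSet_addGadget_inl_self (by omega)⟩
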